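/- For any integer k, nonnegative integers n and r, B_n^{(k)}(x) = \frac{1}{2^r} \sum_{m=0}^{n} \left\{ \binom{n}{m} \sum_{j=0}^{r} \binom{r}{j} B_{n-m}^{(k)}(j) \right\} E_m^{(r)}(x), where E_m^{(r)}(x) are the Euler polynomials of order r. -/

import Mathlib

/-!
Both families are Appell sequences: `B_n^{(k)}(x)` has generating function `A(t) e^{xt}` with
`A = Li_k(1-e^{-t})/(1-e^{-t})`, and `E_m^{(r)}(x)` has `u(t)^{-r} e^{xt}` with `u = (1+e^t)/2`.
Writing `A e^{xt} = (u^{-r} e^{xt}) · (A u^r)` and reading off coefficients of this product of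
exponential generating functions gives the binomial sum. The binomial theorem gives
`u^r = 2^{-r} ∑_j C(r,j) e^{jt}`, and `A e^{jt}` generates `B_l^{(k)}(j)`, which identifies the
coefficients of `A u^r`.
-/

open PowerSeries Finset Nat

/-- The formal power series `e^{-t}`. -/
noncomputable def expNeg : PowerSeries ℂ := PowerSeries.rescale (-1) (PowerSeries.exp ℂ)

/-- The generating function `Li_k(1-e^{-t})/(1-e^{-t}) = ∑_{m≥0} (1-e^{-t})^m/(m+1)^k`,
given coefficientwise (the sum truncates since `(1-e^{-t})^m` has order `≥ m`). -/
noncomputable def polyBernoulliGF (k : ℤ) : PowerSeries ℂ :=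
  PowerSeries.mk fun n => ∑ m ∈ Finset.range (n + 1),
    (((m : ℂ) + 1) ^ k)⁻¹ * PowerSeries.coeff n ((1 - expNeg) ^ m)

/-- The poly-Bernoulli polynomial `B_n^{(k)}(x)`, defined by
`Li_k(1-e^{-t})/(1-e^{-t}) · e^{xt} = ∑ B_n^{(k)}(x) tⁿ/n!`. -/
noncomputable def polyBernoulli (k : ℤ) (n : ℕ) (x : ℂ) : ℂ :=
  (n ! : ℂ) * PowerSeries.coeff n
    (polyBernoulliGF k * PowerSeries.mk fun j => x ^ j / (j ! : ℂ))

/-- Stirling numbers of the second kind, via `(e^t-1)^m = m! ∑_{l} S₂(l,m) t^l/l!`. -/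
noncomputable def stirling2 (l m : ℕ) : ℂ :=
  (l ! : ℂ) / (m ! : ℂ) * PowerSeries.coeff l ((PowerSeries.exp ℂ - 1) ^ m)

/-- Bernoulli polynomials of order `r`: `(t/(e^t-1))^r e^{xt} = ∑ 𝔹_n^{(r)}(x) tⁿ/n!`,
using that `(e^t-1)/t = ∑ tʲ/(j+1)!` is invertible. -/
noncomputable def bernoulliHigher (r n : ℕ) (x : ℂ) : ℂ :=
  (n ! : ℂ) * PowerSeries.coeff n
    (((PowerSeries.mk fun j => (1 : ℂ) / ((j + 1)! : ℂ))⁻¹) ^ r *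
      PowerSeries.mk fun j => x ^ j / (j ! : ℂ))

/-- Euler polynomials of order `r`: `(2/(e^t+1))^r e^{xt} = ∑ E_n^{(r)}(x) tⁿ/n!`. -/
noncomputable def eulerHigher (r n : ℕ) (x : ℂ) : ℂ :=
  (n ! : ℂ) * PowerSeries.coeff n
    ((((1 + PowerSeries.exp ℂ) * PowerSeries.C (1 / 2))⁻¹) ^ r *
      PowerSeries.mk fun j => x ^ j / (j ! : ℂ))

/-- Frobenius-Euler polynomials of order `r`:
`((1-λ)/(e^t-λ))^r e^{xt} = ∑ H_n^{(r)}(x|λ) tⁿ/n!`. -/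
noncomputable def frobeniusEuler (lam : ℂ) (r n : ℕ) (x : ℂ) : ℂ :=
  (n ! : ℂ) * PowerSeries.coeff n
    ((((PowerSeries.exp ℂ - PowerSeries.C lam) * PowerSeries.C (1 - lam)⁻¹)⁻¹) ^ r *
      PowerSeries.mk fun j => x ^ j / (j ! : ℂ))

section BinomialConvolution

variable {R : Type*} [CommSemiring R]

theorem factorial_mul_coeff_mul (f g : R⟦X⟧) (n : ℕ) :
    (n ! : R) * coeff n (f * g) = ∑ m ∈ range (n + 1),
      (n.choose m : R) * ((m ! : R) * coeff m f) * (((n - m)! : R) * coeff (n - m) g) := by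
  rw [coeff_mul, Nat.sum_antidiagonal_eq_sum_range_succ_mk, mul_sum]
  refine sum_congr rfl fun m hm => ?_
  rw [← Nat.choose_mul_factorial_mul_factorial (mem_range_succ_iff.mp hm)]
  push_cast
  ring

end BinomialConvolution

section Appell

variable {K : Type*} [Field K]

noncomputable def appell (A : K⟦X⟧) (n : ℕ) (x : K) : K :=
  n ! * coeff n (A * mk fun j => x ^ j / (j ! : K))

theorem mk_pow_div_factorial_eq_rescale_exp [CharZero K] (x : K) :
    (mk fun j => x ^ j / (j ! : K)) = rescale x (exp K) := by
  ext j
  simp [coeff_rescale, coeff_exp, div_eq_mul_inv]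

theorem appell_natCast [CharZero K] (A : K⟦X⟧) (n j : ℕ) :
    appell A n j = n ! * coeff n (A * exp K ^ j) := by
  rw [appell, mk_pow_div_factorial_eq_rescale_exp, exp_pow_eq_rescale_exp]

theorem appell_eq_sum_choose_mul_appell (A B C : K⟦X⟧) (hBC : B * C = 1) (n : ℕ) (x : K) :
    appell A n x = ∑ m ∈ range (n + 1),
      (n.choose m : K) * ((n - m)! * coeff (n - m) (A * B)) * appell C m x := by
  have hsplit (E : K⟦X⟧) : A * E = (C * E) * (A * B) := by linear_combination (-A * E) * hBC
  rw [appell, hsplit, factorial_mul_coeff_mul]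
  refine sum_congr rfl fun m _ => ?_
  rw [appell]
  ring

theorem factorial_mul_coeff_mul_one_add_exp_div_two_pow [CharZero K] (A : K⟦X⟧) (r l : ℕ) :
    (l ! : K) * coeff l (A * ((1 + exp K) * C (1 / 2)) ^ r) =
      1 / 2 ^ r * ∑ j ∈ range (r + 1), (r.choose j : K) * appell A l j := by
  have hbinom : ((1 + exp K) * C (1 / 2 : K)) ^ r =
      C (1 / 2 ^ r : K) * ∑ j ∈ range (r + 1), C (r.choose j : K) * exp K ^ j := by
    rw [mul_pow, ← map_pow, add_comm, add_pow, mul_comm, one_div, inv_pow, one_div]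
    congr 1
    refine sum_congr rfl fun j _ => ?_
    rw [one_pow, mul_one, mul_comm, map_natCast]
  simp only [hbinom, mul_left_comm A, coeff_C_mul, mul_sum, map_sum, appell_natCast]
  refine sum_congr rfl fun j _ => ?_
  ring

end Appell

theorem polyBernoulli_eq_appell (k : ℤ) : polyBernoulli k = appell (polyBernoulliGF k) := rfl

theorem eulerHigher_eq_appell (r : ℕ) :
    eulerHigher r = appell (((1 + exp ℂ) * C (1 / 2))⁻¹ ^ r) := rfl

theorem polyBernoulli_eq_sum_eulerHigher (k : ℤ) (n r : ℕ) (x : ℂ) :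
    polyBernoulli k n x =
      (1 / 2 ^ r) * ∑ m ∈ Finset.range (n + 1),
        ((n.choose m : ℂ) * ∑ j ∈ Finset.range (r + 1),
          (r.choose j : ℂ) * polyBernoulli k (n - m) j) * eulerHigher r m x := by
  set u := (1 + exp ℂ) * C (1 / 2 : ℂ)
  have hu : constantCoeff u ≠ 0 := by simp [u]
  have hinv : u ^ r * u⁻¹ ^ r = 1 := by rw [← mul_pow, PowerSeries.mul_inv_cancel u hu, one_pow]
  simp only [polyBernoulli_eq_appell, eulerHigher_eq_appell]
  rw [appell_eq_sum_choose_mul_appell _ _ _ hinv, mul_sum]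
  refine sum_congr rfl fun m _ => ?_
  rw [factorial_mul_coeff_mul_one_add_exp_div_two_pow]
  ring
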